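/- Let L > 0 and Λ = (L·ℤ)³ be the cubic lattice of period L. Let γ, δ : [0,1] → ℝ³ be continuously differentiable curves such that the image of γ + w is disjoint from the image of δ + v for all v, w ∈ Λ, and such that the family (L(γ, δ + v))_{v ∈ Λ} is absolutely summable. Then for every w ∈ Λ, Σ_{v ∈ Λ} L(γ + w, δ + v) = Σ_{v ∈ Λ} L(γ, δ + v); i.e. the periodic linking number LK_P(I,J) is independent of the choice of the image of the free chain I used in its computation. -/

import Mathlib

open MeasureTheory Set Filter

/-- Scalar triple product `det(a, b, c)` of three vectors in ℝ³. -/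
noncomputable def tripleProduct (a b c : EuclideanSpace ℝ (Fin 3)) : ℝ :=
  Matrix.det (Matrix.of ![(a : Fin 3 → ℝ), (b : Fin 3 → ℝ), (c : Fin 3 → ℝ)])

/-- The Gauss linking number of two C¹ curves `γ₁ γ₂ : [0,1] → ℝ³`:
`L(γ₁,γ₂) = (1/4π) ∫₀¹∫₀¹ det(γ₁'(t), γ₂'(s), γ₁(t) − γ₂(s)) / ‖γ₁(t) − γ₂(s)‖³ dt ds`. -/
noncomputable def gaussLinkingNumber (γ₁ γ₂ : ℝ → EuclideanSpace ℝ (Fin 3)) : ℝ :=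
  (1 / (4 * Real.pi)) *
    ∫ p in (Icc (0:ℝ) 1) ×ˢ (Icc (0:ℝ) 1),
      tripleProduct (deriv γ₁ p.1) (deriv γ₂ p.2) (γ₁ p.1 - γ₂ p.2) /
        ‖γ₁ p.1 - γ₂ p.2‖ ^ 3

/-- The lattice vector of `(L·ℤ)³` corresponding to integer coordinates `v`. -/
noncomputable def latticeVec (L : ℝ) (v : Fin 3 → ℤ) : EuclideanSpace ℝ (Fin 3) :=
  WithLp.toLp 2 (fun i => L * (v i : ℝ) : Fin 3 → ℝ)

/-! Translating both curves by the same vector leaves the Gauss integrand unchanged, so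
`L(γ + w, δ + v) = L(γ, δ + (v - w))`; the periodic sum over `v ∈ Λ` is then merely reindexed
by the bijection `v ↦ v - w` of the lattice. -/

lemma latticeVec_sub (L : ℝ) (v w : Fin 3 → ℤ) :
    latticeVec L (v - w) = latticeVec L v - latticeVec L w := by
  ext i
  simp only [latticeVec, PiLp.sub_apply, PiLp.toLp_apply, Pi.sub_apply, Int.cast_sub]
  ring

theorem gaussLinkingNumber_add_const (γ₁ γ₂ : ℝ → EuclideanSpace ℝ (Fin 3))
    (a : EuclideanSpace ℝ (Fin 3)) :
    gaussLinkingNumber (fun t => γ₁ t + a) (fun s => γ₂ s + a) = gaussLinkingNumber γ₁ γ₂ := by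
  simp only [gaussLinkingNumber, deriv_add_const, add_sub_add_right_eq_sub]

theorem gaussLinkingNumber_add_latticeVec (L : ℝ) (γ δ : ℝ → EuclideanSpace ℝ (Fin 3))
    (v w : Fin 3 → ℤ) :
    gaussLinkingNumber (fun t => γ t + latticeVec L w) (fun s => δ s + latticeVec L v) =
      gaussLinkingNumber γ (fun s => δ s + latticeVec L (v - w)) := by
  rw [← gaussLinkingNumber_add_const γ _ (latticeVec L w)]
  simp only [latticeVec_sub, sub_add_cancel, add_assoc]

theorem periodicLinkingNumber_image_independent_general
    (L : ℝ)
    (γ δ : ℝ → EuclideanSpace ℝ (Fin 3)) :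
    ∀ w : Fin 3 → ℤ,
      ∑' v : Fin 3 → ℤ,
          gaussLinkingNumber (fun t => γ t + latticeVec L w)
            (fun s => δ s + latticeVec L v) =
        ∑' v : Fin 3 → ℤ, gaussLinkingNumber γ (fun s => δ s + latticeVec L v) := by
  intro w
  simp only [gaussLinkingNumber_add_latticeVec]
  exact (Equiv.subRight w).tsum_eq fun v => gaussLinkingNumber γ (fun s => δ s + latticeVec L v)

/-- The periodic linking number `LK_P(I,J) = Σ_{v ∈ Λ} L(γ, δ + v)` is
independent of the choice of the image of the free chain `I` used in its computation:
for every lattice vector `w`, `Σ_{v ∈ Λ} L(γ + w, δ + v) = Σ_{v ∈ Λ} L(γ, δ + v)`. -/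
theorem periodicLinkingNumber_image_independent
    (L : ℝ) (hL : 0 < L)
    (γ δ : ℝ → EuclideanSpace ℝ (Fin 3))
    (hγ : ContDiff ℝ 1 γ) (hδ : ContDiff ℝ 1 δ)
    (hdisj : ∀ v w : Fin 3 → ℤ, ∀ t ∈ Icc (0:ℝ) 1, ∀ s ∈ Icc (0:ℝ) 1,
      γ t + latticeVec L w ≠ δ s + latticeVec L v)
    (hsum : Summable (fun v : Fin 3 → ℤ =>
      |gaussLinkingNumber γ (fun s => δ s + latticeVec L v)|)) :
    ∀ w : Fin 3 → ℤ,
      ∑' v : Fin 3 → ℤ,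
          gaussLinkingNumber (fun t => γ t + latticeVec L w)
            (fun s => δ s + latticeVec L v) =
        ∑' v : Fin 3 → ℤ, gaussLinkingNumber γ (fun s => δ s + latticeVec L v) :=
  periodicLinkingNumber_image_independent_general L γ δ
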